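/- Let A₂ := {(x,y,z) ∈ ℝ³ : x² + y² = z⁴}. Then LD_0(A₂) = {(0,0,z) : z ∈ ℝ} (the z-axis) and L𝒢D_0(A₂) = ℝ³. -/

import Mathlib

/-!
`A₂` is the surface of revolution `r = z²`. Since `|x|, |y| ≤ z² ≤ ‖(x, y, z)‖²`
on `A₂`, every secant direction at `0` becomes vertical in the limit, and the curves
`t ↦ (t², 0, ±t)` realise both vertical directions. At the point of height `z ≠ 0` and angle `θ`
the surface contains the curves `t ↦ ((z + ct)² cos(θ + ωt), (z + ct)² sin(θ + ωt), z + ct)`,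
whose velocities `c (2z cos θ, 2z sin θ, 1) + z²ω (-sin θ, cos θ, 0)` fill the tangent plane.
As `z → 0` these planes tend to the vertical plane through `(-sin θ, cos θ, 0)`, and every unit
vector lies in such a plane for a suitable `θ`.
-/

open Filter Topology Set Asymptotics

variable {E : Type*} [NormedAddCommGroup E] [NormedSpace ℝ E]

/-- The direction set `D_p(A)`. -/
def dirSet (A : Set E) (p : E) : Set E :=
  {a | ‖a‖ = 1 ∧ ∃ x : ℕ → E, (∀ i, x i ∈ A ∧ x i ≠ p) ∧
    Tendsto x atTop (𝓝 p) ∧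
    Tendsto (fun i => ‖x i - p‖⁻¹ • (x i - p)) atTop (𝓝 a)}

/-- The real tangent cone `LD_p(A)`. -/
def LDir (A : Set E) (p : E) : Set E :=
  {w | ∃ a ∈ dirSet A p, ∃ t : ℝ, 0 ≤ t ∧ w = t • a}

/-- Condition (SSP) at `p`. -/
def SSP (A : Set E) (p : E) : Prop :=
  ∀ a : ℕ → E, (∀ m, a m ≠ p) → Tendsto a atTop (𝓝 p) →
    (∃ d ∈ dirSet A p, Tendsto (fun m => ‖a m - p‖⁻¹ • (a m - p)) atTop (𝓝 d)) →
    ∃ b : ℕ → E, (∀ m, b m ∈ A) ∧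
      Tendsto (fun m => ‖a m - b m‖ / ‖a m - p‖) atTop (𝓝 0) ∧
      Tendsto (fun m => ‖a m - b m‖ / ‖b m - p‖) atTop (𝓝 0)

/-- The geometric directional bundle fiber `𝒢D_p(A)`. -/
def GDir (A : Set E) (p : E) : Set E :=
  {a | ‖a‖ = 1 ∧ ∃ q : ℕ → E, (∀ m, q m ∈ A) ∧ Tendsto q atTop (𝓝 p) ∧
    ∃ u : ℕ → E, (∀ m, u m ∈ dirSet A (q m)) ∧ Tendsto u atTop (𝓝 a)}

/-- The cone `L𝒢D_p(A)` over the geometric directional bundle fiber. -/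
def LGDir (A : Set E) (p : E) : Set E :=
  {w | ∃ a ∈ GDir A p, ∃ t : ℝ, 0 ≤ t ∧ w = t • a}

/-- A bi-Lipschitz homeomorphism of `E`: a bijection which is Lipschitz with
Lipschitz inverse (equivalently, antilipschitz). -/
def IsBiLipschitz (h : E → E) : Prop :=
  Function.Bijective h ∧ ∃ K K' : NNReal, LipschitzWith K h ∧ AntilipschitzWith K' h


open Real

local notation "ℝ³" => EuclideanSpace ℝ (Fin 3)

abbrev A₂ : Set ℝ³ := {v | v 0 ^ 2 + v 1 ^ 2 = v 2 ^ 4}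

section DirectionSets

variable {A : Set E} {p a v : E}

theorem mem_dirSet_of_eventually {x : ℕ → E} (hx : ∀ᶠ i in atTop, x i ∈ A ∧ x i ≠ p)
    (hxp : Tendsto x atTop (𝓝 p)) (ha : ‖a‖ = 1)
    (hdir : Tendsto (fun i => ‖x i - p‖⁻¹ • (x i - p)) atTop (𝓝 a)) : a ∈ dirSet A p := by
  obtain ⟨N, hN⟩ := eventually_atTop.1 hx
  exact ⟨ha, fun i => x (i + N), fun i => hN _ (Nat.le_add_left N i),
    (tendsto_add_atTop_iff_nat N).2 hxp, (tendsto_add_atTop_iff_nat N).2 hdir⟩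

theorem inv_norm_smul_of_pos {c : ℝ} (hc : 0 < c) (w : E) :
    ‖c • w‖⁻¹ • c • w = ‖w‖⁻¹ • w := by
  rcases eq_or_ne w 0 with rfl | hw
  · simp
  rw [norm_smul, Real.norm_of_nonneg hc.le, smul_smul]
  congr 1
  field_simp

theorem mem_dirSet_of_hasDerivAt {γ : ℝ → E} (hA : ∀ t, γ t ∈ A) (h0 : γ 0 = p)
    (hd : HasDerivAt γ v 0) (hv : v ≠ 0) : ‖v‖⁻¹ • v ∈ dirSet A p := by
  subst h0
  have hslope : Tendsto (fun t => t⁻¹ • (γ t - γ 0)) (𝓝[>] 0) (𝓝 v) := by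
    simpa using hd.tendsto_slope_zero_right
  have hdir : Tendsto (fun t => ‖γ t - γ 0‖⁻¹ • (γ t - γ 0)) (𝓝[>] 0) (𝓝 (‖v‖⁻¹ • v)) := by
    refine ((hslope.norm.inv₀ (norm_ne_zero_iff.2 hv)).smul hslope).congr' ?_
    filter_upwards [self_mem_nhdsWithin] with t ht
    exact inv_norm_smul_of_pos (inv_pos.2 ht) _
  have hne : ∀ᶠ t in 𝓝[>] 0, γ t ∈ A ∧ γ t ≠ γ 0 := by
    filter_upwards [hslope.eventually_ne hv] with t ht
    exact ⟨hA t, fun h => ht (by simp [h])⟩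
  obtain ⟨T, hT⟩ := exists_seq_tendsto (𝓝[>] (0 : ℝ))
  exact mem_dirSet_of_eventually (hT.eventually hne)
    ((hd.continuousAt.tendsto.mono_left nhdsWithin_le_nhds).comp hT) (norm_smul_inv_norm hv)
    (hdir.comp hT)

theorem smul_mem_LDir_of_hasDerivAt {γ : ℝ → E} {t : ℝ} (hA : ∀ s, γ s ∈ A) (h0 : γ 0 = p)
    (hd : HasDerivAt γ v 0) (hv : v ≠ 0) (ht : 0 ≤ t) : t • v ∈ LDir A p :=
  ⟨_, mem_dirSet_of_hasDerivAt hA h0 hd hv, t * ‖v‖, by positivity, by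
    rw [smul_smul, mul_assoc, mul_inv_cancel₀ (norm_ne_zero_iff.2 hv), mul_one]⟩

theorem map_eq_zero_of_mem_dirSet {F : Type*} [NormedAddCommGroup F] [NormedSpace ℝ F]
    (L : E →L[ℝ] F) (hA : ∀ x ∈ A, ‖L (x - p)‖ ≤ ‖x - p‖ ^ 2) (ha : a ∈ dirSet A p) :
    L a = 0 := by
  obtain ⟨-, x, hx, hxp, hdir⟩ := ha
  have hsmall : Tendsto (fun i => L (‖x i - p‖⁻¹ • (x i - p))) atTop (𝓝 0) := by
    refine squeeze_zero_norm (fun i => ?_) (by simpa using (tendsto_sub_nhds_zero_iff.2 hxp).norm)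
    have hpos : 0 < ‖x i - p‖ := norm_pos_iff.2 (sub_ne_zero.2 (hx i).2)
    calc ‖L (‖x i - p‖⁻¹ • (x i - p))‖ = ‖x i - p‖⁻¹ * ‖L (x i - p)‖ := by
          rw [map_smul, norm_smul, norm_inv, norm_norm]
      _ ≤ ‖x i - p‖⁻¹ * ‖x i - p‖ ^ 2 := by gcongr; exact hA _ (hx i).1
      _ = ‖x i - p‖ := by field_simp
  exact tendsto_nhds_unique ((L.continuous.tendsto a).comp hdir) hsmall

theorem map_eq_zero_of_mem_LDir {F : Type*} [NormedAddCommGroup F] [NormedSpace ℝ F]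
    (L : E →L[ℝ] F) (hA : ∀ x ∈ A, ‖L (x - p)‖ ≤ ‖x - p‖ ^ 2) {w : E} (hw : w ∈ LDir A p) :
    L w = 0 := by
  obtain ⟨a, ha, t, -, rfl⟩ := hw
  rw [map_smul, map_eq_zero_of_mem_dirSet L hA ha, smul_zero]

theorem mem_GDir_of_tendsto {q u : ℕ → E} (hq : ∀ m, q m ∈ A) (hqp : Tendsto q atTop (𝓝 p))
    (hu : ∀ m, u m ≠ 0 → ‖u m‖⁻¹ • u m ∈ dirSet A (q m)) (hua : Tendsto u atTop (𝓝 a))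
    (ha : ‖a‖ = 1) : a ∈ GDir A p := by
  have ha0 : ‖a‖ ≠ 0 := by rw [ha]; exact one_ne_zero
  obtain ⟨N, hN⟩ := eventually_atTop.1 (hua.eventually_ne (norm_ne_zero_iff.1 ha0))
  have hdir : Tendsto (fun m => ‖u m‖⁻¹ • u m) atTop (𝓝 a) := by
    simpa [ha] using (hua.norm.inv₀ ha0).smul hua
  exact ⟨ha, fun m => q (m + N), fun m => hq _, (tendsto_add_atTop_iff_nat N).2 hqp,
    fun m => ‖u (m + N)‖⁻¹ • u (m + N), fun m => hu _ (hN _ (Nat.le_add_left N m)),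
    (tendsto_add_atTop_iff_nat N).2 hdir⟩

theorem LGDir_eq_univ_of_sphere_subset [Nontrivial E] (h : Metric.sphere (0 : E) 1 ⊆ GDir A p) :
    LGDir A p = univ := by
  refine eq_univ_of_forall fun w => ?_
  rcases eq_or_ne w 0 with rfl | hw
  · obtain ⟨a, ha⟩ := exists_norm_eq E zero_le_one
    exact ⟨a, h (mem_sphere_zero_iff_norm.2 ha), 0, le_rfl, (zero_smul ℝ a).symm⟩
  · exact ⟨‖w‖⁻¹ • w, h (mem_sphere_zero_iff_norm.2 (norm_smul_inv_norm hw)), ‖w‖, norm_nonneg w,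
      (smul_inv_smul₀ (norm_ne_zero_iff.2 hw) w).symm⟩

end DirectionSets

theorem hasDerivAt_euclidean₃ {f g h : ℝ → ℝ} {f' g' h' t : ℝ} (hf : HasDerivAt f f' t)
    (hg : HasDerivAt g g' t) (hh : HasDerivAt h h' t) :
    HasDerivAt (fun s => !₂[f s, g s, h s]) !₂[f', g', h'] t := by
  have hpi : HasDerivAt (fun s => ![f s, g s, h s]) ![f', g', h'] t := by
    rw [hasDerivAt_pi]
    intro i
    fin_cases i <;> simpa
  exact (PiLp.hasFDerivAt_toLp 2 _).comp_hasDerivAt t hpi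

theorem abs_apply_le_sq_norm_of_mem_A₂ {x : ℝ³} (hx : x ∈ A₂) {i : Fin 3} (hi : i ≠ 2) :
    |x i| ≤ ‖x‖ ^ 2 := by
  have h2 : x 2 ^ 2 ≤ ‖x‖ ^ 2 := sq_le_sq.2 (by simpa using PiLp.norm_apply_le x 2)
  have hx' : x 0 ^ 2 + x 1 ^ 2 = x 2 ^ 4 := hx
  refine abs_le_of_sq_le_sq ?_ (by positivity)
  obtain rfl | rfl : i = 0 ∨ i = 1 := by fin_cases i <;> simp_all
  · nlinarith [sq_nonneg (x 1)]
  · nlinarith [sq_nonneg (x 0)]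

theorem LDir_subset_axis : LDir A₂ 0 ⊆ {v : ℝ³ | v 0 = 0 ∧ v 1 = 0} := by
  intro w hw
  have hcoord : ∀ i : Fin 3, i ≠ 2 → w i = 0 := fun i hi => by
    simpa using map_eq_zero_of_mem_LDir (EuclideanSpace.proj i)
      (fun x hx => by simpa using abs_apply_le_sq_norm_of_mem_A₂ hx hi) hw
  exact ⟨hcoord 0 (by decide), hcoord 1 (by decide)⟩

theorem axis_subset_LDir : {v : ℝ³ | v 0 = 0 ∧ v 1 = 0} ⊆ LDir A₂ 0 := by
  have haxis : ∀ c : ℝ, c ≠ 0 → ∀ t : ℝ, 0 ≤ t → t • !₂[0, 0, c] ∈ LDir A₂ 0 := by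
    intro c hc t ht
    refine smul_mem_LDir_of_hasDerivAt (γ := fun s => !₂[c ^ 2 * s ^ 2, 0, c * s])
      (fun s => show (c ^ 2 * s ^ 2) ^ 2 + 0 ^ 2 = (c * s) ^ 4 by ring) (by ext i; fin_cases i <;> simp) ?_
      (fun h => hc (by simpa using congrArg (· 2) h)) ht
    refine hasDerivAt_euclidean₃ ?_ (hasDerivAt_const 0 0) ?_
    · simpa using (hasDerivAt_pow 2 (0 : ℝ)).const_mul (c ^ 2)
    · simpa using (hasDerivAt_id (0 : ℝ)).const_mul c
  rintro w ⟨h0, h1⟩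
  by_cases h2 : w 2 = 0
  · have hw : w = (0 : ℝ) • !₂[0, 0, 1] := by ext i; fin_cases i <;> simp [h0, h1, h2]
    exact hw ▸ haxis 1 one_ne_zero 0 le_rfl
  · have hw : w = (1 : ℝ) • !₂[0, 0, w 2] := by ext i; fin_cases i <;> simp [h0, h1]
    exact hw ▸ haxis (w 2) h2 1 zero_le_one

noncomputable def cylindrical (z θ : ℝ) : ℝ³ := !₂[z ^ 2 * cos θ, z ^ 2 * sin θ, z]

theorem cylindrical_mem_A₂ (z θ : ℝ) : cylindrical z θ ∈ A₂ := by
  change (z ^ 2 * cos θ) ^ 2 + (z ^ 2 * sin θ) ^ 2 = z ^ 4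
  linear_combination z ^ 4 * cos_sq_add_sin_sq θ

theorem continuous_cylindrical (θ : ℝ) : Continuous fun z => cylindrical z θ := by
  unfold cylindrical
  fun_prop

theorem hasDerivAt_cylindrical_line (z θ c ω : ℝ) :
    HasDerivAt (fun t => cylindrical (z + c * t) (θ + ω * t))
      !₂[2 * z * c * cos θ - z ^ 2 * ω * sin θ, 2 * z * c * sin θ + z ^ 2 * ω * cos θ, c] 0 := by
  have hz : HasDerivAt (fun t => z + c * t) c 0 := by
    simpa using ((hasDerivAt_id (0 : ℝ)).const_mul c).const_add z
  have hθ : HasDerivAt (fun t => θ + ω * t) ω 0 := by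
    simpa using ((hasDerivAt_id (0 : ℝ)).const_mul ω).const_add θ
  refine hasDerivAt_euclidean₃ ?_ ?_ hz
  · exact ((hz.fun_pow 2).mul hθ.cos).congr_deriv (by simp; ring)
  · exact ((hz.fun_pow 2).mul hθ.sin).congr_deriv (by simp; ring)

theorem sphere_subset_GDir : Metric.sphere (0 : ℝ³) 1 ⊆ GDir A₂ 0 := by
  intro a ha
  -- polar coordinates of `(a 1, -a 0)`, so that `(a 0, a 1) = s • (-sin θ, cos θ)`
  obtain ⟨s, θ, hcos, hsin⟩ : ∃ s θ : ℝ, s * cos θ = a 1 ∧ s * sin θ = -a 0 :=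
    ⟨_, _, Complex.norm_mul_cos_arg ⟨a 1, -a 0⟩, Complex.norm_mul_sin_arg ⟨a 1, -a 0⟩⟩
  set z : ℕ → ℝ := fun m => 1 / (m + 1)
  have hz : Tendsto z atTop (𝓝 0) := tendsto_one_div_add_atTop_nhds_zero_nat
  refine mem_GDir_of_tendsto (q := fun m => cylindrical (z m) θ)
    (u := fun m => a + (2 * z m * a 2) • !₂[cos θ, sin θ, 0]) (fun m => cylindrical_mem_A₂ _ _) ?_
    (fun m hu => ?_) ?_ (mem_sphere_zero_iff_norm.1 ha)
  · have h0 : cylindrical 0 θ = 0 := by ext i; fin_cases i <;> simp [cylindrical]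
    simpa [h0, Function.comp_def] using ((continuous_cylindrical θ).tendsto 0).comp hz
  · have hzm : z m ≠ 0 := by positivity
    refine mem_dirSet_of_hasDerivAt (fun t => cylindrical_mem_A₂ _ _) (by simp)
      ((hasDerivAt_cylindrical_line (z m) θ (a 2) (s / z m ^ 2)).congr_deriv ?_) hu
    ext i
    fin_cases i <;> simp <;> field_simp <;> linarith
  · simpa using tendsto_const_nhds.add (((hz.const_mul 2).mul_const (a 2)).smul_const
      (!₂[cos θ, sin θ, 0] : ℝ³))

theorem stmt13 :
    LDir {v : EuclideanSpace ℝ (Fin 3) | v 0 ^ 2 + v 1 ^ 2 = v 2 ^ 4} 0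
        = {v : EuclideanSpace ℝ (Fin 3) | v 0 = 0 ∧ v 1 = 0} ∧
    LGDir {v : EuclideanSpace ℝ (Fin 3) | v 0 ^ 2 + v 1 ^ 2 = v 2 ^ 4} 0
        = Set.univ :=
  ⟨LDir_subset_axis.antisymm axis_subset_LDir, LGDir_eq_univ_of_sphere_subset sphere_subset_GDir⟩
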